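/- arXiv:1803.03124 — 6 statements merged into one kernel-verified Lean document; each statement's English description precedes it below -/
import Mathlib

section
/- Suppose y₁, y₂ are differentiable on I and satisfy the system (g₁−g₂)y₁' = −y₁(g₁' + f₁g₁ + f₀ + g₂g₁) − y₂(g₂' + f₁g₂ + f₀ + g₂²) − f and (g₁−g₂)y₂' = y₁(g₁' + f₁g₁ + f₀ + g₁²) + y₂(g₂' + f₁g₂ + f₀ + g₂g₁) + f, where g₁, g₂ are C¹ with g₁ ≠ g₂ pointwise. Then y := y₁ + y₂ satisfies y' = g₁y₁ + g₂y₂ and y'' + f₁y' + f₀y + f = 0. -/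
/-!
Adding the two equations of the system gives `(g₁ - g₂) (y₁' + y₂') = (g₁ - g₂) (g₁ y₁ + g₂ y₂)`,
and adding `g₁` times the first to `g₂` times the second gives `(g₁ - g₂)` times the identity
`(g₁ y₁ + g₂ y₂)' = -(f₁ y' + f₀ y + f)`; both claims follow by cancelling `g₁ - g₂ ≠ 0`.
-/

section FirstOrderSystem

variable {K : Type*} [Field K] {f₀ f₁ f g₁ g₂ g₁' g₂' y₁ y₂ y₁' y₂' : K}

theorem add_eq_of_firstOrderSystem (hne : g₁ ≠ g₂)
    (hsys₁ : (g₁ - g₂) * y₁' =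
      -(y₁ * (g₁' + f₁ * g₁ + f₀ + g₂ * g₁)) - y₂ * (g₂' + f₁ * g₂ + f₀ + g₂ ^ 2) - f)
    (hsys₂ : (g₁ - g₂) * y₂' =
      y₁ * (g₁' + f₁ * g₁ + f₀ + g₁ ^ 2) + y₂ * (g₂' + f₁ * g₂ + f₀ + g₂ * g₁) + f) :
    y₁' + y₂' = g₁ * y₁ + g₂ * y₂ :=
  mul_left_cancel₀ (sub_ne_zero.mpr hne) (by linear_combination hsys₁ + hsys₂)

theorem mul_add_mul_deriv_eq_of_firstOrderSystem (hne : g₁ ≠ g₂)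
    (hsys₁ : (g₁ - g₂) * y₁' =
      -(y₁ * (g₁' + f₁ * g₁ + f₀ + g₂ * g₁)) - y₂ * (g₂' + f₁ * g₂ + f₀ + g₂ ^ 2) - f)
    (hsys₂ : (g₁ - g₂) * y₂' =
      y₁ * (g₁' + f₁ * g₁ + f₀ + g₁ ^ 2) + y₂ * (g₂' + f₁ * g₂ + f₀ + g₂ * g₁) + f) :
    g₁' * y₁ + g₁ * y₁' + (g₂' * y₂ + g₂ * y₂') =
      -(f₁ * (g₁ * y₁ + g₂ * y₂) + f₀ * (y₁ + y₂) + f) :=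
  mul_left_cancel₀ (sub_ne_zero.mpr hne) (by linear_combination g₁ * hsys₁ + g₂ * hsys₂)

end FirstOrderSystem

theorem stmt_1_general (I : Set ℝ) (f₀ f₁ f g₁ g₂ g₁' g₂' y₁ y₂ y₁' y₂' : ℝ → ℝ)
    (hne : ∀ t ∈ I, g₁ t ≠ g₂ t)
    (hg₁ : ∀ t ∈ I, HasDerivAt g₁ (g₁' t) t)
    (hg₂ : ∀ t ∈ I, HasDerivAt g₂ (g₂' t) t)
    (hy₁ : ∀ t ∈ I, HasDerivAt y₁ (y₁' t) t)
    (hy₂ : ∀ t ∈ I, HasDerivAt y₂ (y₂' t) t)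
    (hsys₁ : ∀ t ∈ I, (g₁ t - g₂ t) * y₁' t =
      -(y₁ t * (g₁' t + f₁ t * g₁ t + f₀ t + g₂ t * g₁ t))
      - y₂ t * (g₂' t + f₁ t * g₂ t + f₀ t + (g₂ t) ^ 2) - f t)
    (hsys₂ : ∀ t ∈ I, (g₁ t - g₂ t) * y₂' t =
      y₁ t * (g₁' t + f₁ t * g₁ t + f₀ t + (g₁ t) ^ 2)
      + y₂ t * (g₂' t + f₁ t * g₂ t + f₀ t + g₂ t * g₁ t) + f t) :
    ∀ t ∈ I,
      HasDerivAt (fun s => y₁ s + y₂ s) (g₁ t * y₁ t + g₂ t * y₂ t) t ∧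
      HasDerivAt (fun s => g₁ s * y₁ s + g₂ s * y₂ s)
        (-(f₁ t * (g₁ t * y₁ t + g₂ t * y₂ t) + f₀ t * (y₁ t + y₂ t) + f t)) t := by
  intro t ht
  refine ⟨((hy₁ t ht).fun_add (hy₂ t ht)).congr_deriv ?_,
    (((hg₁ t ht).fun_mul (hy₁ t ht)).fun_add ((hg₂ t ht).fun_mul (hy₂ t ht))).congr_deriv ?_⟩
  · exact add_eq_of_firstOrderSystem (hne t ht) (hsys₁ t ht) (hsys₂ t ht)
  · exact mul_add_mul_deriv_eq_of_firstOrderSystem (hne t ht) (hsys₁ t ht) (hsys₂ t ht)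

/-- The first-order system (13) implies `y = y₁ + y₂` solves `y'' + f₁ y' + f₀ y + f = 0`
with `y' = g₁ y₁ + g₂ y₂`. -/
theorem stmt_1 (I : Set ℝ) (f₀ f₁ f g₁ g₂ g₁' g₂' y₁ y₂ y₁' y₂' : ℝ → ℝ)
    (hf₀ : ContinuousOn f₀ I) (hf₁ : ContinuousOn f₁ I) (hf : ContinuousOn f I)
    (hne : ∀ t ∈ I, g₁ t ≠ g₂ t)
    (hg₁ : ∀ t ∈ I, HasDerivAt g₁ (g₁' t) t) (hg₁c : ContinuousOn g₁' I)
    (hg₂ : ∀ t ∈ I, HasDerivAt g₂ (g₂' t) t) (hg₂c : ContinuousOn g₂' I)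
    (hy₁ : ∀ t ∈ I, HasDerivAt y₁ (y₁' t) t)
    (hy₂ : ∀ t ∈ I, HasDerivAt y₂ (y₂' t) t)
    (hsys₁ : ∀ t ∈ I, (g₁ t - g₂ t) * y₁' t =
      -(y₁ t * (g₁' t + f₁ t * g₁ t + f₀ t + g₂ t * g₁ t))
      - y₂ t * (g₂' t + f₁ t * g₂ t + f₀ t + (g₂ t) ^ 2) - f t)
    (hsys₂ : ∀ t ∈ I, (g₁ t - g₂ t) * y₂' t =
      y₁ t * (g₁' t + f₁ t * g₁ t + f₀ t + (g₁ t) ^ 2)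
      + y₂ t * (g₂' t + f₁ t * g₂ t + f₀ t + g₂ t * g₁ t) + f t) :
    ∀ t ∈ I,
      HasDerivAt (fun s => y₁ s + y₂ s) (g₁ t * y₁ t + g₂ t * y₂ t) t ∧
      HasDerivAt (fun s => g₁ s * y₁ s + g₂ s * y₂ s)
        (-(f₁ t * (g₁ t * y₁ t + g₂ t * y₂ t) + f₀ t * (y₁ t + y₂ t) + f t)) t :=
  stmt_1_general I f₀ f₁ f g₁ g₂ g₁' g₂' y₁ y₂ y₁' y₂' hne hg₁ hg₂ hy₁ hy₂ hsys₁ hsys₂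
end

section
/- If y is twice differentiable, g₁ ≠ g₂ pointwise are C¹, y = y₁ + y₂ with y' = g₁y₁ + g₂y₂ (y₁, y₂ defined by the unique decomposition), and y'' + f₁y' + f₀y + f = 0, then y₁ and y₂ satisfy (g₁−g₂)y₁' = −y₁(g₁' + f₁g₁ + f₀ + g₂g₁) − y₂(g₂' + f₁g₂ + f₀ + g₂²) − f and (g₁−g₂)y₂' = y₁(g₁' + f₁g₁ + f₀ + g₁²) + y₂(g₂' + f₁g₂ + f₀ + g₂g₁) + f. -/
/-- Converse direction: a solution of `y'' + f₁ y' + f₀ y + f = 0`, decomposed via the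
explicit formulas, yields functions `y₁, y₂` satisfying the first-order system (13). -/
theorem stmt_2 (I : Set ℝ) (f₀ f₁ f g₁ g₂ g₁' g₂' y y' y'' : ℝ → ℝ)
    (hf₀ : ContinuousOn f₀ I) (hf₁ : ContinuousOn f₁ I) (hf : ContinuousOn f I)
    (hne : ∀ t ∈ I, g₁ t ≠ g₂ t)
    (hg₁ : ∀ t ∈ I, HasDerivAt g₁ (g₁' t) t) (hg₁c : ContinuousOn g₁' I)
    (hg₂ : ∀ t ∈ I, HasDerivAt g₂ (g₂' t) t) (hg₂c : ContinuousOn g₂' I)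
    (hy : ∀ t ∈ I, HasDerivAt y (y' t) t)
    (hy' : ∀ t ∈ I, HasDerivAt y' (y'' t) t)
    (hode : ∀ t ∈ I, y'' t + f₁ t * y' t + f₀ t * y t + f t = 0)
    (y₁ y₂ : ℝ → ℝ)
    (hy₁def : y₁ = fun t => (g₂ t * y t - y' t) / (g₂ t - g₁ t))
    (hy₂def : y₂ = fun t => -(g₁ t * y t - y' t) / (g₂ t - g₁ t)) :
    ∀ t ∈ I,
      HasDerivAt y₁
        ((-(y₁ t * (g₁' t + f₁ t * g₁ t + f₀ t + g₂ t * g₁ t))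
          - y₂ t * (g₂' t + f₁ t * g₂ t + f₀ t + (g₂ t) ^ 2) - f t) / (g₁ t - g₂ t)) t ∧
      HasDerivAt y₂
        ((y₁ t * (g₁' t + f₁ t * g₁ t + f₀ t + (g₁ t) ^ 2)
          + y₂ t * (g₂' t + f₁ t * g₂ t + f₀ t + g₂ t * g₁ t) + f t) / (g₁ t - g₂ t)) t := by
  intro t ht
  have hd : g₂ t - g₁ t ≠ 0 := sub_ne_zero.mpr (Ne.symm (hne t ht))
  have hd2 : g₁ t - g₂ t ≠ 0 := sub_ne_zero.mpr (hne t ht)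
  have hode' : y'' t = -(f₁ t * y' t + f₀ t * y t + f t) := by linarith [hode t ht]
  constructor
  · subst hy₁def hy₂def
    have h1 : HasDerivAt (fun s => (g₂ s * y s - y' s) / (g₂ s - g₁ s))
        (((g₂' t * y t + g₂ t * y' t - y'' t) * (g₂ t - g₁ t)
          - (g₂ t * y t - y' t) * (g₂' t - g₁' t)) / (g₂ t - g₁ t) ^ 2) t := by
      exact (((hg₂ t ht).mul (hy t ht)).sub (hy' t ht)).div ((hg₂ t ht).sub (hg₁ t ht)) hd
    convert h1 using 1
    rw [hode']
    field_simp
    ring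
  · subst hy₁def hy₂def
    have h1 : HasDerivAt (fun s => -(g₁ s * y s - y' s) / (g₂ s - g₁ s))
        (((-(g₁' t * y t + g₁ t * y' t - y'' t)) * (g₂ t - g₁ t)
          - (-(g₁ t * y t - y' t)) * (g₂' t - g₁' t)) / (g₂ t - g₁ t) ^ 2) t := by
      exact ((((hg₁ t ht).mul (hy t ht)).sub (hy' t ht)).neg).div ((hg₂ t ht).sub (hg₁ t ht)) hd
    convert h1 using 1
    rw [hode']
    field_simp
    ring
end

section
/- If g₁ and g₂ are two distinct solutions of the Riccati equation g' + f₁g + f₀ + g² = 0 on I (with g₁ ≠ g₂ pointwise), and y₁, y₂ are differentiable functions satisfying y₁' = g₁y₁ − f/(g₁−g₂) and y₂' = g₂y₂ + f/(g₁−g₂), then y = y₁ + y₂ solves y'' + f₁y' + f₀y + f = 0. -/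
/-! If `y' = g y + h` and `g` solves the Riccati equation, then `(g y)' = -(f₁ g y + f₀ y) + g h`:
the `g² y` terms cancel. With `h₂ = -h₁ = f / (g₁ - g₂)` the forcing terms add up to
`g₁ h₁ + g₂ h₂ = -f`, so `y = y₁ + y₂` and `y' = g₁ y₁ + g₂ y₂` give `y'' + f₁ y' + f₀ y + f = 0`. -/

theorem hasDerivAt_mul_of_riccati {𝕜 : Type*} [NontriviallyNormedField 𝕜] {g y : 𝕜 → 𝕜}
    {a b h t : 𝕜} (hg : HasDerivAt g (-(a * g t + b + g t ^ 2)) t)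
    (hy : HasDerivAt y (g t * y t + h) t) :
    HasDerivAt (fun s => g s * y s) (-(a * (g t * y t) + b * y t) + g t * h) t :=
  (hg.mul hy).congr_deriv (by ring)

theorem stmt_3_general (I : Set ℝ) (f₀ f₁ f g₁ g₂ y₁ y₂ : ℝ → ℝ)
    (hne : ∀ t ∈ I, g₁ t ≠ g₂ t)
    (hg₁ : ∀ t ∈ I, HasDerivAt g₁ (-(f₁ t * g₁ t + f₀ t + (g₁ t) ^ 2)) t)
    (hg₂ : ∀ t ∈ I, HasDerivAt g₂ (-(f₁ t * g₂ t + f₀ t + (g₂ t) ^ 2)) t)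
    (hy₁ : ∀ t ∈ I, HasDerivAt y₁ (g₁ t * y₁ t - f t / (g₁ t - g₂ t)) t)
    (hy₂ : ∀ t ∈ I, HasDerivAt y₂ (g₂ t * y₂ t + f t / (g₁ t - g₂ t)) t) :
    ∀ t ∈ I,
      HasDerivAt (fun s => y₁ s + y₂ s) (g₁ t * y₁ t + g₂ t * y₂ t) t ∧
      HasDerivAt (fun s => g₁ s * y₁ s + g₂ s * y₂ s)
        (-(f₁ t * (g₁ t * y₁ t + g₂ t * y₂ t) + f₀ t * (y₁ t + y₂ t) + f t)) t := by
  intro t ht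
  refine ⟨((hy₁ t ht).add (hy₂ t ht)).congr_deriv (by ring), ?_⟩
  have hy₁' : HasDerivAt y₁ (g₁ t * y₁ t + -(f t / (g₁ t - g₂ t))) t := by
    simpa only [← sub_eq_add_neg] using hy₁ t ht
  have forcing : g₁ t * -(f t / (g₁ t - g₂ t)) + g₂ t * (f t / (g₁ t - g₂ t)) = -f t := by
    field_simp [sub_ne_zero.mpr (hne t ht)]
    ring
  refine ((hasDerivAt_mul_of_riccati (hg₁ t ht) hy₁').add
    (hasDerivAt_mul_of_riccati (hg₂ t ht) (hy₂ t ht))).congr_deriv ?_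
  linear_combination forcing

/-- If `g₁, g₂` are two distinct Riccati solutions and `y₁' = g₁ y₁ - f/(g₁-g₂)`,
`y₂' = g₂ y₂ + f/(g₁-g₂)`, then `y = y₁ + y₂` solves `y'' + f₁ y' + f₀ y + f = 0`. -/
theorem stmt_3 (I : Set ℝ) (f₀ f₁ f g₁ g₂ y₁ y₂ : ℝ → ℝ)
    (hf₀ : ContinuousOn f₀ I) (hf₁ : ContinuousOn f₁ I) (hf : ContinuousOn f I)
    (hne : ∀ t ∈ I, g₁ t ≠ g₂ t)
    (hg₁ : ∀ t ∈ I, HasDerivAt g₁ (-(f₁ t * g₁ t + f₀ t + (g₁ t) ^ 2)) t)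
    (hg₂ : ∀ t ∈ I, HasDerivAt g₂ (-(f₁ t * g₂ t + f₀ t + (g₂ t) ^ 2)) t)
    (hy₁ : ∀ t ∈ I, HasDerivAt y₁ (g₁ t * y₁ t - f t / (g₁ t - g₂ t)) t)
    (hy₂ : ∀ t ∈ I, HasDerivAt y₂ (g₂ t * y₂ t + f t / (g₁ t - g₂ t)) t) :
    ∀ t ∈ I,
      HasDerivAt (fun s => y₁ s + y₂ s) (g₁ t * y₁ t + g₂ t * y₂ t) t ∧
      HasDerivAt (fun s => g₁ s * y₁ s + g₂ s * y₂ s)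
        (-(f₁ t * (g₁ t * y₁ t + g₂ t * y₂ t) + f₀ t * (y₁ t + y₂ t) + f t)) t :=
  stmt_3_general I f₀ f₁ f g₁ g₂ y₁ y₂ hne hg₁ hg₂ hy₁ hy₂
end

section
/- Let q be a positive twice differentiable function on I and f₁ a differentiable function, and define g_± = ±iq − q'/(2q) − f₁/2 (complex-valued). Then g_+ and g_− both satisfy the Riccati equation g' + f₁g + f₀ + g² = 0 if and only if q satisfies −q''/(2q) + 3(q')²/(4q²) + f₀ − q² − f₁'/2 − f₁²/4 = 0. -/
/-! Write `g = c q - q'/(2q) - f₁/2` with `c = ±i`. Since `c² = -1`, expanding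
`g' + f₁ g + f₀ + g²` makes every term containing `c` cancel (`c q'` against the cross term
`2 c q · (-q'/(2q))`, and `c q f₁` against `2 c q · (-f₁/2)`), leaving exactly the left-hand side
of the equation for `q`. As `g'` is determined by uniqueness of derivatives, each Riccati equation
is therefore equivalent to that one equation, independently of the sign of `c`. -/

section Riccati

variable {c : ℂ}

noncomputable def riccatiCandidate (c : ℂ) (q q' : ℝ → ℝ) (f₁ : ℝ → ℂ) (s : ℝ) : ℂ :=
  c * q s - (q' s : ℂ) / (2 * q s) - f₁ s / 2

theorem riccati_residual_eq (hc : c ^ 2 = -1) {Q Q' Q'' F F' F₀ : ℂ} (hQ : Q ≠ 0) :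
    c * Q' - (Q'' * (2 * Q) - Q' * (2 * Q')) / (2 * Q) ^ 2 - F' / 2
      + (F * (c * Q - Q' / (2 * Q) - F / 2) + F₀ + (c * Q - Q' / (2 * Q) - F / 2) ^ 2)
    = -Q'' / (2 * Q) + 3 * Q' ^ 2 / (4 * Q ^ 2) + F₀ - Q ^ 2 - F' / 2 - F ^ 2 / 4 := by
  field_simp
  linear_combination (16 * Q ^ 4) * hc

theorem hasDerivAt_riccatiCandidate {q q' q'' : ℝ → ℝ} {f₁ f₁' : ℝ → ℂ} {t : ℝ}
    (hq : q t ≠ 0) (hq' : HasDerivAt q (q' t) t) (hq'' : HasDerivAt q' (q'' t) t)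
    (hf₁ : HasDerivAt f₁ (f₁' t) t) :
    HasDerivAt (riccatiCandidate c q q' f₁)
      (c * q' t - (q'' t * (2 * q t) - q' t * (2 * q' t)) / (2 * (q t : ℂ)) ^ 2 - f₁' t / 2) t := by
  have hqc : HasDerivAt (fun s => (q s : ℂ)) (q' t) t := hq'.ofReal_comp
  have hden : HasDerivAt (fun s => 2 * (q s : ℂ)) (2 * q' t) t := hqc.const_mul 2
  have hden_ne : 2 * (q t : ℂ) ≠ 0 := by simpa using hq
  exact ((hqc.const_mul c).sub (hq''.ofReal_comp.div hden hden_ne)).sub (hf₁.div_const 2)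

theorem riccati_iff {f₀ f₁ f₁' : ℝ → ℂ} {q q' q'' : ℝ → ℝ} {t : ℝ} (hc : c ^ 2 = -1)
    (hq : q t ≠ 0) (hq' : HasDerivAt q (q' t) t) (hq'' : HasDerivAt q' (q'' t) t)
    (hf₁ : HasDerivAt f₁ (f₁' t) t) :
    HasDerivAt (riccatiCandidate c q q' f₁)
        (-(f₁ t * riccatiCandidate c q q' f₁ t + f₀ t + riccatiCandidate c q q' f₁ t ^ 2)) t ↔
      -(q'' t : ℂ) / (2 * q t) + 3 * (q' t : ℂ) ^ 2 / (4 * (q t : ℂ) ^ 2)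
        + f₀ t - (q t : ℂ) ^ 2 - f₁' t / 2 - f₁ t ^ 2 / 4 = 0 := by
  have hg := hasDerivAt_riccatiCandidate (c := c) hq hq' hq'' hf₁
  unfold riccatiCandidate at hg ⊢
  rw [← riccati_residual_eq hc (F₀ := f₀ t) (by exact_mod_cast hq)]
  refine ⟨fun h => ?_, fun h => ?_⟩
  · rw [hg.unique h]
    ring
  · convert hg using 1
    linear_combination -h

end Riccati

open Complex in
theorem stmt_8_general (I : Set ℝ) (f₀ f₁ f₁' : ℝ → ℂ) (q q' q'' : ℝ → ℝ)
    (hf₁ : ∀ t ∈ I, HasDerivAt f₁ (f₁' t) t)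
    (hq : ∀ t ∈ I, 0 < q t)
    (hq' : ∀ t ∈ I, HasDerivAt q (q' t) t)
    (hq'' : ∀ t ∈ I, HasDerivAt q' (q'' t) t)
    (gp gm : ℝ → ℂ)
    (hgp : gp = fun t => Complex.I * (q t : ℂ) - (q' t : ℂ) / (2 * (q t : ℂ)) - f₁ t / 2)
    (hgm : gm = fun t => -(Complex.I * (q t : ℂ)) - (q' t : ℂ) / (2 * (q t : ℂ)) - f₁ t / 2) :
    (∀ t ∈ I,
      HasDerivAt gp (-(f₁ t * gp t + f₀ t + (gp t) ^ 2)) t ∧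
      HasDerivAt gm (-(f₁ t * gm t + f₀ t + (gm t) ^ 2)) t) ↔
    (∀ t ∈ I,
      -(q'' t : ℂ) / (2 * (q t : ℂ)) + 3 * (q' t : ℂ) ^ 2 / (4 * (q t : ℂ) ^ 2)
        + f₀ t - (q t : ℂ) ^ 2 - f₁' t / 2 - (f₁ t) ^ 2 / 4 = 0) := by
  simp only [← neg_mul] at hgm
  change gp = riccatiCandidate Complex.I q q' f₁ at hgp
  change gm = riccatiCandidate (-Complex.I) q q' f₁ at hgm
  subst hgp hgm
  refine forall₂_congr fun t ht => ?_
  have hq_ne := (hq t ht).ne'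
  rw [riccati_iff I_sq hq_ne (hq' t ht) (hq'' t ht) (hf₁ t ht),
    riccati_iff (by rw [neg_sq, I_sq]) hq_ne (hq' t ht) (hq'' t ht) (hf₁ t ht), and_self]

open Complex in
/-- `g_± = ±iq - q'/(2q) - f₁/2` both satisfy the Riccati equation
`g' + f₁ g + f₀ + g² = 0` iff `q` satisfies
`-q''/(2q) + 3(q')²/(4q²) + f₀ - q² - f₁'/2 - f₁²/4 = 0`. -/
theorem stmt_8 (I : Set ℝ) (f₀ f₁ f₁' : ℝ → ℂ) (q q' q'' : ℝ → ℝ)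
    (hf₀ : ContinuousOn f₀ I)
    (hf₁ : ∀ t ∈ I, HasDerivAt f₁ (f₁' t) t)
    (hq : ∀ t ∈ I, 0 < q t)
    (hq' : ∀ t ∈ I, HasDerivAt q (q' t) t)
    (hq'' : ∀ t ∈ I, HasDerivAt q' (q'' t) t)
    (gp gm : ℝ → ℂ)
    (hgp : gp = fun t => Complex.I * (q t : ℂ) - (q' t : ℂ) / (2 * (q t : ℂ)) - f₁ t / 2)
    (hgm : gm = fun t => -(Complex.I * (q t : ℂ)) - (q' t : ℂ) / (2 * (q t : ℂ)) - f₁ t / 2) :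
    (∀ t ∈ I,
      HasDerivAt gp (-(f₁ t * gp t + f₀ t + (gp t) ^ 2)) t ∧
      HasDerivAt gm (-(f₁ t * gm t + f₀ t + (gm t) ^ 2)) t) ↔
    (∀ t ∈ I,
      -(q'' t : ℂ) / (2 * (q t : ℂ)) + 3 * (q' t : ℂ) ^ 2 / (4 * (q t : ℂ) ^ 2)
        + f₀ t - (q t : ℂ) ^ 2 - f₁' t / 2 - (f₁ t) ^ 2 / 4 = 0) :=
  stmt_8_general I f₀ f₁ f₁' q q' q'' hf₁ hq hq' hq'' gp gm hgp hgm
end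

section
/- Suppose g₁, g₂ satisfy the coupled system g₁' + f₁g₁ + f₀ + g₁g₂ = 0, g₂' + f₁g₂ + f₀ + g₁g₂ = 0, with g₁(t₁) − g₂(t₁) = C ≠ 0. Then g₁ satisfies the Riccati-type equation g₁' + [f₁ − C·exp(−∫_{t₁}^t f₁ ds)]·g₁ + f₀ + g₁² = 0. -/
/-!
The difference `u = g₁ - g₂` solves the linear equation `u' = -f₁ u`, since the terms
`f₀ + g₁ g₂` cancel; hence `u t = C * exp (-∫_{t₁}^t f₁)`. Substituting `g₂ = g₁ - u` into the
first equation of the system gives the Riccati equation.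
-/

open Set Real

theorem hasDerivWithinAt_integral_Icc {E : Type*} [NormedAddCommGroup E] [NormedSpace ℝ E]
    [CompleteSpace E] {f : ℝ → E} {a b x₀ x : ℝ} (hf : ContinuousOn f (Icc a b))
    (hx₀ : x₀ ∈ Icc a b) (hx : x ∈ Icc a b) :
    HasDerivWithinAt (fun y => ∫ t in x₀..y, f t) (f x) (Icc a b) x := by
  have : Fact (x ∈ Icc a b) := ⟨hx⟩
  exact intervalIntegral.integral_hasDerivWithinAt_right
    ((hf.mono (uIcc_subset_Icc hx₀ hx)).intervalIntegrable)
    (hf.stronglyMeasurableAtFilter_nhdsWithin measurableSet_Icc x) (hf x hx)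

theorem eq_mul_exp_neg_integral_of_hasDerivWithinAt {s : Set ℝ} (hs : s.OrdConnected)
    {p u : ℝ → ℝ} (hp : ContinuousOn p s)
    (hu : ∀ t ∈ s, HasDerivWithinAt u (-(p t * u t)) s t) {t₀ t : ℝ} (ht₀ : t₀ ∈ s)
    (ht : t ∈ s) : u t = u t₀ * exp (-∫ x in t₀..t, p x) := by
  set J := uIcc t₀ t
  have hJ : J ⊆ s := hs.uIcc_subset ht₀ ht
  have hderiv : ∀ x ∈ J, HasDerivWithinAt (fun y => u y * exp (∫ z in t₀..y, p z)) 0 J x :=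
    fun x hx => (((hu x (hJ hx)).mono hJ).mul
      (hasDerivWithinAt_integral_Icc (hp.mono hJ) left_mem_uIcc hx).exp).congr_deriv (by ring)
  have hconst := (convex_uIcc t₀ t).norm_image_sub_le_of_norm_hasDerivWithin_le hderiv
    (C := 0) (fun _ _ => norm_zero.le) left_mem_uIcc right_mem_uIcc
  simp only [zero_mul, norm_le_zero_iff, sub_eq_zero, intervalIntegral.integral_same,
    exp_zero, mul_one] at hconst
  rw [← hconst, mul_assoc, ← exp_add, add_neg_cancel, exp_zero, mul_one]

theorem stmt_11_general (I : Set ℝ) (hI : I.OrdConnected) (t₁ : ℝ) (ht₁ : t₁ ∈ I)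
    (f₀ f₁ g₁ g₂ g₁' : ℝ → ℝ)
    (hf₁ : ContinuousOn f₁ I)
    (hg₁ : ∀ t ∈ I, HasDerivAt g₁ (g₁' t) t)
    (hsys₁ : ∀ t ∈ I, g₁' t + f₁ t * g₁ t + f₀ t + g₂ t * g₁ t = 0)
    (hg₂ : ∀ t ∈ I, HasDerivAt g₂ (-(f₁ t * g₂ t + f₀ t + g₂ t * g₁ t)) t)
    (C : ℝ) (hC : C = g₁ t₁ - g₂ t₁) :
    ∀ t ∈ I,
      g₁' t + (f₁ t - C * Real.exp (-∫ s in t₁..t, f₁ s)) * g₁ t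
        + f₀ t + (g₁ t) ^ 2 = 0 := by
  have hdiff : ∀ t ∈ I,
      HasDerivWithinAt (fun x => g₁ x - g₂ x) (-(f₁ t * (g₁ t - g₂ t))) I t := fun t ht =>
    ((hg₁ t ht).sub (hg₂ t ht)).hasDerivWithinAt.congr_deriv
      (by linear_combination hsys₁ t ht)
  intro t ht
  have hu := eq_mul_exp_neg_integral_of_hasDerivWithinAt hI hf₁ hdiff ht₁ ht
  rw [← hC] at hu
  linear_combination hsys₁ t ht + g₁ t * hu

/-- With the coupled system and `C = g₁(t₁) - g₂(t₁) ≠ 0`, `g₁` satisfies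
`g₁' + [f₁ - C exp(-∫_{t₁}^t f₁)] g₁ + f₀ + g₁² = 0`. -/
theorem stmt_11 (I : Set ℝ) (hI : I.OrdConnected) (t₁ : ℝ) (ht₁ : t₁ ∈ I)
    (f₀ f₁ g₁ g₂ g₁' : ℝ → ℝ)
    (hf₀ : ContinuousOn f₀ I) (hf₁ : ContinuousOn f₁ I)
    (hg₁ : ∀ t ∈ I, HasDerivAt g₁ (g₁' t) t)
    (hsys₁ : ∀ t ∈ I, g₁' t + f₁ t * g₁ t + f₀ t + g₂ t * g₁ t = 0)
    (hg₂ : ∀ t ∈ I, HasDerivAt g₂ (-(f₁ t * g₂ t + f₀ t + g₂ t * g₁ t)) t)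
    (C : ℝ) (hC : C = g₁ t₁ - g₂ t₁) (hC0 : C ≠ 0) :
    ∀ t ∈ I,
      g₁' t + (f₁ t - C * Real.exp (-∫ s in t₁..t, f₁ s)) * g₁ t
        + f₀ t + (g₁ t) ^ 2 = 0 :=
  stmt_11_general I hI t₁ ht₁ f₀ f₁ g₁ g₂ g₁' hf₁ hg₁ hsys₁ hg₂ C hC
end

section
/- With M, F, H as defined (F having rows (g_{1,n}), (g_{m+1,n} − g_{m,n}') for 1 ≤ m ≤ N−2, and last row Lₙ = −g_{N−1,n}' − Σ_{k=0}^{N−1} f_k g_{k,n} with g_{0,n} := 1; H = (0,…,0,−f)ᵀ), if Y : I → ℝᴺ is differentiable and satisfies M·Y' = F·Y + H, then y := Σₙ Yₙ satisfies y^{(m)} = Σₙ g_{m,n}Yₙ for 1 ≤ m ≤ N−1 and solves y^{(N)} + f_{N−1}y^{(N−1)} + ⋯ + f₀y + f = 0. -/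
open Finset

section ProductRule

variable {ι : Type*} [Fintype ι] {g g' Y Y' : ι → ℝ → ℝ} {t : ℝ}

theorem hasDerivAt_sum_mul (hg : ∀ n, HasDerivAt (g n) (g' n t) t)
    (hY : ∀ n, HasDerivAt (Y n) (Y' n t) t) :
    HasDerivAt (fun s => ∑ n, g n s * Y n s) (∑ n, g' n t * Y n t + ∑ n, g n t * Y' n t) t := by
  rw [← sum_add_distrib]
  exact HasDerivAt.fun_sum fun n _ => (hg n).mul (hY n)

/-- The `gₙ'` terms of a row of the system cancel against those of the product rule. -/
theorem hasDerivAt_sum_mul_of_row {a : ι → ℝ} {b : ℝ}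
    (hg : ∀ n, HasDerivAt (g n) (g' n t) t) (hY : ∀ n, HasDerivAt (Y n) (Y' n t) t)
    (hrow : ∑ n, g n t * Y' n t = ∑ n, (a n - g' n t) * Y n t + b) :
    HasDerivAt (fun s => ∑ n, g n s * Y n s) (∑ n, a n * Y n t + b) t := by
  convert hasDerivAt_sum_mul hg hY using 1
  simp only [hrow, sub_mul, sum_sub_distrib]
  ring

end ProductRule

theorem stmt_18_general (N₀ : ℕ) (I : Set ℝ)
    (f : Fin (N₀ + 2) → ℝ → ℝ) (fh : ℝ → ℝ)
    (g g' : Fin (N₀ + 2) → Fin (N₀ + 2) → ℝ → ℝ)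
    (hgC1 : ∀ m n, (∀ t ∈ I, HasDerivAt (g m n) (g' m n t) t) ∧ ContinuousOn (g' m n) I)
    (Y Y' : Fin (N₀ + 2) → ℝ → ℝ)
    (hY : ∀ n, ∀ t ∈ I, HasDerivAt (Y n) (Y' n t) t)
    (F : Fin (N₀ + 2) → Fin (N₀ + 2) → ℝ → ℝ)
    (hF : ∀ m n t, F m n t =
      if h : (m : ℕ) + 1 < N₀ + 2 then g ⟨(m : ℕ) + 1, h⟩ n t - g' m n t
      else -(g' m n t) - ∑ k, f k t * g k n t)
    (hsys : ∀ t ∈ I, ∀ m : Fin (N₀ + 2),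
      ∑ n, g m n t * Y' n t =
        ∑ n, F m n t * Y n t + (if (m : ℕ) = N₀ + 1 then -(fh t) else 0)) :
    ∀ t ∈ I,
      (∀ m : Fin (N₀ + 2), ∀ h : (m : ℕ) + 1 < N₀ + 2,
        HasDerivAt (fun s => ∑ n, g m n s * Y n s)
          (∑ n, g ⟨(m : ℕ) + 1, h⟩ n t * Y n t) t) ∧
      HasDerivAt (fun s => ∑ n, g (Fin.last (N₀ + 1)) n s * Y n s)
        (-(∑ k, f k t * (∑ n, g k n t * Y n t)) - fh t) t := by
  intro t ht
  have hg m n := (hgC1 m n).1 t ht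
  have hYt n := hY n t ht
  refine ⟨fun m h => ?_, ?_⟩
  · have hm : (m : ℕ) ≠ N₀ + 1 := by omega
    simpa using hasDerivAt_sum_mul_of_row (hg m) hYt (b := 0)
      (by simp [hsys t ht m, hF, h, hm])
  · have hlast n : F (Fin.last _) n t = -∑ k, f k t * g k n t - g' (Fin.last _) n t := by
      rw [hF, dif_neg (by simp), neg_sub_comm]
    convert hasDerivAt_sum_mul_of_row (hg (Fin.last _)) hYt
      (a := fun n => -∑ k, f k t * g k n t) (b := -fh t)
      (by simp only [hsys t ht, hlast, Fin.val_last, if_pos]) using 1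
    simp only [neg_mul, sum_neg_distrib, sum_mul, mul_sum, mul_assoc, sub_eq_add_neg]
    rw [sum_comm]

/-- If `Y` is differentiable and satisfies the matrix system `M Y' = F Y + H` (with `M`
having first row ones via `g 0 n ≡ 1`, the rows of `F` being `g_{m+1,n} - g'_{m,n}` for
`0 ≤ m ≤ N-2` and last row `Lₙ = -g'_{N-1,n} - ∑_k f_k g_{k,n}`, and `H = (0,…,0,-f)ᵀ`),
then `y = ∑ n, Y n` satisfies `y^{(m)} = ∑ n, g m n * Y n` and solves
`y^{(N)} + f_{N-1} y^{(N-1)} + ⋯ + f₀ y + f = 0`. Here `N = N₀ + 2 ≥ 2`. -/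
theorem stmt_18 (N₀ : ℕ) (I : Set ℝ)
    (f : Fin (N₀ + 2) → ℝ → ℝ) (fh : ℝ → ℝ)
    (hf : ∀ k, ContinuousOn (f k) I) (hfh : ContinuousOn fh I)
    (g g' : Fin (N₀ + 2) → Fin (N₀ + 2) → ℝ → ℝ)
    (hg0 : ∀ n, ∀ t : ℝ, g 0 n t = 1)
    (hg0' : ∀ n, ∀ t : ℝ, g' 0 n t = 0)
    (hgC1 : ∀ m n, (∀ t ∈ I, HasDerivAt (g m n) (g' m n t) t) ∧ ContinuousOn (g' m n) I)
    (hdet : ∀ t ∈ I, (Matrix.of fun m n => g m n t).det ≠ 0)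
    (Y Y' : Fin (N₀ + 2) → ℝ → ℝ)
    (hY : ∀ n, ∀ t ∈ I, HasDerivAt (Y n) (Y' n t) t)
    (F : Fin (N₀ + 2) → Fin (N₀ + 2) → ℝ → ℝ)
    (hF : ∀ m n t, F m n t =
      if h : (m : ℕ) + 1 < N₀ + 2 then g ⟨(m : ℕ) + 1, h⟩ n t - g' m n t
      else -(g' m n t) - ∑ k, f k t * g k n t)
    (hsys : ∀ t ∈ I, ∀ m : Fin (N₀ + 2),
      ∑ n, g m n t * Y' n t =
        ∑ n, F m n t * Y n t + (if (m : ℕ) = N₀ + 1 then -(fh t) else 0)) :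
    ∀ t ∈ I,
      (∀ m : Fin (N₀ + 2), ∀ h : (m : ℕ) + 1 < N₀ + 2,
        HasDerivAt (fun s => ∑ n, g m n s * Y n s)
          (∑ n, g ⟨(m : ℕ) + 1, h⟩ n t * Y n t) t) ∧
      HasDerivAt (fun s => ∑ n, g (Fin.last (N₀ + 1)) n s * Y n s)
        (-(∑ k, f k t * (∑ n, g k n t * Y n t)) - fh t) t :=
  stmt_18_general N₀ I f fh g g' hgC1 Y Y' hY F hF hsys
end
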